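/- arXiv:2002.02679 — 8 statements merged into one kernel-verified Lean document; each statement's English description precedes it below -/
import Mathlib

section
/- For every real number c with 0 ≤ c < 1, one has c·exp(√(1−c²))/(1 + √(1−c²)) < 1. -/
/-!
Put `s = √(1 - c²)`, so that `c² = (1 + s)(1 - s)`. For `0 < c < 1` the claim `c e^s < 1 + s`
is, after squaring, `e^{2s} < (1 + s)/(1 - s)`, i.e. `s < artanh s`, which holds because
`artanh s = s + s³/3 + s⁵/5 + ⋯` has positive terms. For `c ≤ 0` the ratio is not positive.
-/

open Real

lemma two_mul_lt_log_one_add_sub_log_one_sub {x : ℝ} (hx0 : 0 < x) (hx1 : x < 1) :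
    2 * x < log (1 + x) - log (1 - x) := by
  have hsum := hasSum_log_sub_log_of_abs_lt_one (abs_lt.2 ⟨by linarith, hx1⟩)
  have hpartial := sum_le_hasSum (Finset.range 2) (fun k _ => by positivity) hsum
  norm_num [Finset.sum_range_succ] at hpartial
  nlinarith [pow_pos hx0 3]

lemma exp_two_mul_lt_one_add_div_one_sub {x : ℝ} (hx0 : 0 < x) (hx1 : x < 1) :
    exp (2 * x) < (1 + x) / (1 - x) := by
  rw [← exp_log (div_pos (by linarith) (by linarith)), exp_lt_exp,
    log_div (by linarith) (by linarith)]
  exact two_mul_lt_log_one_add_sub_log_one_sub hx0 hx1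

lemma mul_exp_lt_one_add_of_sq_add_sq_eq_one {c s : ℝ} (hs0 : 0 < s) (hs1 : s < 1)
    (hcs : c ^ 2 + s ^ 2 = 1) : c * exp s < 1 + s := by
  have hfactor : 0 < (1 + s) * (1 - s) := by nlinarith
  refine lt_of_pow_lt_pow_left₀ 2 (by linarith) ?_
  calc (c * exp s) ^ 2 = (1 + s) * (1 - s) * exp (2 * s) := by
        rw [mul_pow, ← exp_nat_mul, show c ^ 2 = (1 + s) * (1 - s) by linear_combination hcs]
        norm_num
    _ < (1 + s) * (1 - s) * ((1 + s) / (1 - s)) :=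
        mul_lt_mul_of_pos_left (exp_two_mul_lt_one_add_div_one_sub hs0 hs1) hfactor
    _ = (1 + s) ^ 2 := by field_simp [show 1 - s ≠ 0 by linarith]

theorem carlini_jacobi_ratio_lt_one_general (c : ℝ) (hc1 : c < 1) :
    c * Real.exp (Real.sqrt (1 - c ^ 2)) / (1 + Real.sqrt (1 - c ^ 2)) < 1 := by
  have hden : 0 < 1 + √(1 - c ^ 2) := by positivity
  rcases le_or_gt c 0 with hc | hc
  · exact (div_nonpos_of_nonpos_of_nonneg (mul_nonpos_of_nonpos_of_nonneg hc (exp_pos _).le)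
      hden.le).trans_lt one_pos
  have hrad : 0 < 1 - c ^ 2 := by nlinarith
  have hsq : √(1 - c ^ 2) ^ 2 = 1 - c ^ 2 := sq_sqrt hrad.le
  rw [div_lt_one hden]
  exact mul_exp_lt_one_add_of_sq_add_sq_eq_one (sqrt_pos.2 hrad) (by nlinarith) (by linarith)

/-- For every eccentricity `0 ≤ c < 1`, the common ratio
`c·exp(√(1-c²))/(1 + √(1-c²))` is strictly less than `1`. -/
theorem carlini_jacobi_ratio_lt_one (c : ℝ) (hc0 : 0 ≤ c) (hc1 : c < 1) :
    c * Real.exp (Real.sqrt (1 - c ^ 2)) / (1 + Real.sqrt (1 - c ^ 2)) < 1 :=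
  carlini_jacobi_ratio_lt_one_general c hc1
end

section
/- The function h : [0,1] → ℝ defined by h(c) = c·exp(√(1−c²))/(1 + √(1−c²)) is strictly monotonically increasing on [0,1], with h(0) = 0 and h(1) = 1. -/
/-!
Writing `s = √(1 - c²)`, so that `c² = (1 - s)(1 + s)`, the square of the ratio is
`(1 - s) e^{2s} / (1 + s)`. Its derivative in `s` is `-2 s² e^{2s} / (1 + s)²`, so it decreases
in `s ≥ 0`, while `s` decreases in `c ∈ [0, 1]`.
-/

open Real Set

theorem hasDerivAt_one_sub_mul_exp_two_mul_div_one_add {s : ℝ} (hs : 1 + s ≠ 0) :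
    HasDerivAt (fun s : ℝ => (1 - s) * exp (2 * s) / (1 + s))
      (-(2 * s ^ 2 * exp (2 * s) / (1 + s) ^ 2)) s := by
  have hnum : HasDerivAt (fun s : ℝ => (1 - s) * exp (2 * s))
      (-1 * exp (2 * s) + (1 - s) * (exp (2 * s) * 2)) s :=
    ((hasDerivAt_id' s).const_sub 1).mul ((hasDerivAt_id' s).const_mul 2 |>.exp |>.congr_deriv
      (by simp [mul_comm]))
  exact (hnum.div ((hasDerivAt_id' s).const_add 1) hs).congr_deriv (by field_simp; ring)

theorem strictAntiOn_one_sub_mul_exp_two_mul_div_one_add :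
    StrictAntiOn (fun s : ℝ => (1 - s) * exp (2 * s) / (1 + s)) (Ici 0) := by
  have hderiv {s : ℝ} (hs : 0 ≤ s) :=
    hasDerivAt_one_sub_mul_exp_two_mul_div_one_add (s := s) (by positivity)
  refine strictAntiOn_of_deriv_neg (convex_Ici 0)
    (fun s hs => (hderiv hs).continuousAt.continuousWithinAt) fun s hs => ?_
  rw [interior_Ici] at hs
  rw [(hderiv hs.out.le).deriv, neg_lt_zero]
  have : 0 < s := hs
  positivity

theorem sq_mul_exp_div_one_add {c s : ℝ} (hsc : s ^ 2 = 1 - c ^ 2) (hs : 1 + s ≠ 0) :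
    (c * exp s / (1 + s)) ^ 2 = (1 - s) * exp (2 * s) / (1 + s) := by
  rw [div_pow, mul_pow, show c ^ 2 = 1 - s ^ 2 by linarith, ← exp_nat_mul, Nat.cast_ofNat]
  field_simp
  ring

/-- The function `h(c) = c·exp(√(1-c²))/(1 + √(1-c²))` is strictly monotonically
increasing on `[0,1]`, with `h 0 = 0` and `h 1 = 1`. -/
theorem carlini_ratio_strictMonoOn :
    StrictMonoOn
      (fun c : ℝ => c * Real.exp (Real.sqrt (1 - c ^ 2)) / (1 + Real.sqrt (1 - c ^ 2)))
      (Set.Icc (0 : ℝ) 1) ∧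
    (fun c : ℝ => c * Real.exp (Real.sqrt (1 - c ^ 2)) / (1 + Real.sqrt (1 - c ^ 2))) 0 = 0 ∧
    (fun c : ℝ => c * Real.exp (Real.sqrt (1 - c ^ 2)) / (1 + Real.sqrt (1 - c ^ 2))) 1 = 1 := by
  refine ⟨fun x hx y hy hxy => ?_, by norm_num, by norm_num⟩
  have hsq {c : ℝ} (hc : c ∈ Icc (0 : ℝ) 1) :=
    sq_mul_exp_div_one_add (c := c) (s := √(1 - c ^ 2))
      (sq_sqrt (by nlinarith [hc.1, hc.2])) (by positivity)
  have hs : √(1 - y ^ 2) < √(1 - x ^ 2) :=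
    sqrt_lt_sqrt (by nlinarith [hy.1, hy.2]) (by nlinarith [hx.1])
  have hy_nonneg : 0 ≤ y * exp √(1 - y ^ 2) / (1 + √(1 - y ^ 2)) := by
    have hy0 : 0 ≤ y := hy.1
    positivity
  refine lt_of_pow_lt_pow_left₀ 2 hy_nonneg ?_
  rw [hsq hx, hsq hy]
  exact strictAntiOn_one_sub_mul_exp_two_mul_div_one_add (sqrt_nonneg _) (sqrt_nonneg _) hs
end

section
/- There exists a unique real number c with 0 < c < 1 such that c·exp(√(1+c²)) = 1 + √(1+c²); moreover this unique root satisfies 0.662 < c < 0.663. -/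
/-! With `s = √(1 + c²)`, the function `f c = c e^s - (1 + s)` has derivative
`e^s (1 + c²/s) - c/s`, which is positive because `|c| < s` and `e^s > 1`. So `f` is strictly
increasing on all of `ℝ` and has at most one zero. Taylor bounds on `exp` show `f 0.662 < 0 < f 0.663`,
and the intermediate value theorem places the zero between them. -/

open Real

noncomputable def laplaceDefect (c : ℝ) : ℝ :=
  c * exp √(1 + c ^ 2) - (1 + √(1 + c ^ 2))

lemma laplaceDefect_eq_zero_iff {c : ℝ} :
    laplaceDefect c = 0 ↔ c * exp √(1 + c ^ 2) = 1 + √(1 + c ^ 2) :=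
  sub_eq_zero

lemma continuous_laplaceDefect : Continuous laplaceDefect := by
  unfold laplaceDefect
  fun_prop

lemma abs_lt_sqrt_one_add_sq (x : ℝ) : |x| < √(1 + x ^ 2) := by
  rw [← sqrt_sq_eq_abs]
  exact sqrt_lt_sqrt (sq_nonneg x) (lt_one_add _)

lemma hasDerivAt_sqrt_one_add_sq (x : ℝ) :
    HasDerivAt (fun c : ℝ => √(1 + c ^ 2)) (x / √(1 + x ^ 2)) x := by
  have hpos : 0 < √(1 + x ^ 2) := (abs_nonneg x).trans_lt (abs_lt_sqrt_one_add_sq x)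
  convert (((hasDerivAt_pow 2 x).const_add 1).sqrt (by positivity)) using 1
  field_simp
  ring

lemma hasDerivAt_laplaceDefect (x : ℝ) :
    HasDerivAt laplaceDefect
      (exp √(1 + x ^ 2) * (1 + x * (x / √(1 + x ^ 2))) - x / √(1 + x ^ 2)) x := by
  have hs := hasDerivAt_sqrt_one_add_sq x
  exact (((hasDerivAt_id' x).mul hs.exp).sub (hs.const_add 1)).congr_deriv (by ring)

lemma strictMono_laplaceDefect : StrictMono laplaceDefect := by
  refine strictMono_of_deriv_pos fun x => ?_
  rw [(hasDerivAt_laplaceDefect x).deriv]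
  set s := √(1 + x ^ 2)
  have hxs : |x| < s := abs_lt_sqrt_one_add_sq x
  have hs : 0 < s := (abs_nonneg x).trans_lt hxs
  have hslope : x / s < 1 := (div_lt_one hs).2 ((le_abs_self x).trans_lt hxs)
  have hexp : 1 < exp s := one_lt_exp_iff.2 hs
  have hsq : 0 ≤ x * (x / s) := by rw [← mul_div_assoc, ← sq]; positivity
  nlinarith

lemma laplaceDefect_neg_of_bounds {c l u : ℝ} (hc : 0 ≤ c) (hl : l ≤ √(1 + c ^ 2))
    (hu : √(1 + c ^ 2) ≤ u) (h : c * exp u < 1 + l) : laplaceDefect c < 0 := by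
  have : c * exp √(1 + c ^ 2) ≤ c * exp u := by gcongr
  unfold laplaceDefect
  linarith

lemma laplaceDefect_pos_of_bounds {c l u : ℝ} (hc : 0 ≤ c) (hl : l ≤ √(1 + c ^ 2))
    (hu : √(1 + c ^ 2) ≤ u) (h : 1 + u < c * exp l) : 0 < laplaceDefect c := by
  have : c * exp l ≤ c * exp √(1 + c ^ 2) := by gcongr
  unfold laplaceDefect
  linarith

lemma exp_1_1993_lt : exp 1.1993 < 3.318 := by
  have htaylor : exp 0.1993 ≤ 1.22055 := by
    refine (exp_bound' (by norm_num) (by norm_num) (n := 5) (by norm_num)).trans ?_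
    norm_num [Finset.sum_range_succ, Nat.factorial]
  calc exp 1.1993 = exp 1 * exp 0.1993 := by rw [← exp_add]; norm_num
    _ ≤ 2.7182818286 * 1.22055 := by gcongr; exact exp_one_lt_d9.le
    _ < 3.318 := by norm_num

lemma lt_exp_1_1998 : 3.319 < exp 1.1998 := by
  have htaylor : 1.22108 ≤ exp 0.1998 := by
    refine le_trans ?_ (sum_le_exp_of_nonneg (by norm_num) 4)
    norm_num [Finset.sum_range_succ, Nat.factorial]
  calc (3.319 : ℝ) < 2.7182818283 * 1.22108 := by norm_num
    _ ≤ exp 1 * exp 0.1998 := by gcongr; exact exp_one_gt_d9.le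
    _ = exp 1.1998 := by rw [← exp_add]; norm_num

lemma laplaceDefect_0_662_neg : laplaceDefect 0.662 < 0 := by
  refine laplaceDefect_neg_of_bounds (l := 1.1992) (u := 1.1993) (by norm_num) ?_ ?_ ?_
  · rw [le_sqrt (by norm_num) (by norm_num)]; norm_num
  · rw [sqrt_le_left (by norm_num)]; norm_num
  · nlinarith [exp_1_1993_lt]

lemma laplaceDefect_0_663_pos : 0 < laplaceDefect 0.663 := by
  refine laplaceDefect_pos_of_bounds (l := 1.1998) (u := 1.1999) (by norm_num) ?_ ?_ ?_
  · rw [le_sqrt (by norm_num) (by norm_num)]; norm_num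
  · rw [sqrt_le_left (by norm_num)]; norm_num
  · nlinarith [lt_exp_1_1998]

/-- The Laplace (Carlini–Laplace) limit constant: there is a unique `c ∈ (0,1)` with
`c·e^{√(1+c²)} = 1 + √(1+c²)`, and this root lies between `0.662` and `0.663`. -/
theorem laplace_limit_constant :
    (∃! c : ℝ, 0 < c ∧ c < 1 ∧
      c * Real.exp (Real.sqrt (1 + c ^ 2)) = 1 + Real.sqrt (1 + c ^ 2)) ∧
    ∀ c : ℝ, 0 < c → c < 1 →
      c * Real.exp (Real.sqrt (1 + c ^ 2)) = 1 + Real.sqrt (1 + c ^ 2) →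
      0.662 < c ∧ c < 0.663 := by
  have hbounds : ∀ c : ℝ, laplaceDefect c = 0 → 0.662 < c ∧ c < 0.663 := fun c hc =>
    ⟨strictMono_laplaceDefect.lt_iff_lt.1 (hc ▸ laplaceDefect_0_662_neg),
      strictMono_laplaceDefect.lt_iff_lt.1 (hc ▸ laplaceDefect_0_663_pos)⟩
  obtain ⟨c, hc, hroot⟩ := intermediate_value_Ioo (by norm_num : (0.662 : ℝ) ≤ 0.663)
    continuous_laplaceDefect.continuousOn ⟨laplaceDefect_0_662_neg, laplaceDefect_0_663_pos⟩
  refine ⟨⟨c, ⟨by linarith [hc.1], by linarith [hc.2], laplaceDefect_eq_zero_iff.1 hroot⟩,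
    fun y ⟨_, _, hy⟩ => ?_⟩, fun c _ _ hc => hbounds c (laplaceDefect_eq_zero_iff.2 hc)⟩
  exact strictMono_laplaceDefect.injective (laplaceDefect_eq_zero_iff.2 hy ▸ hroot.symm)
end

section
/- Let p > 0 and m be real numbers, and define s : ℝ → ℝ by s(x) = Σ_{k=0}^∞ (p²m²/4)^k · x^{2k} / (k! · ∏_{j=1}^{k}(p+j)). Then this power series converges for every real x, and for every x ≠ 0 the function s satisfies the differential equation s''(x) + ((2p+1)/x)·s'(x) = p²·m²·s(x). -/
/-!
In the variable `t = x²` Carlini's series is `G(t) = Σ cₙ tⁿ` with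
`cₙ = Aⁿ / (n! (p+1)ₙ)` and `A = p²m²/4`. The ratio `cₙ₊₁ / cₙ = A / ((n+1)(n+p+1))` says
exactly that `G` solves `t G'' + (p+1) G' = A G`, and since `s'(x) = 2x G'(x²)` and
`s''(x) = 2 G'(x²) + 4x² G''(x²)`, this becomes `s'' + ((2p+1)/x) s' = 4A s`. The coefficients
are dominated by `|A|ⁿ / n!`, so all series converge everywhere and may be differentiated
term by term.
-/

open Finset

/-- Carlini's series `s(x) = Σ_k (p²m²/4)^k x^{2k} / (k! ∏_{j=1}^k (p+j))`. -/
noncomputable def carliniS (p m : ℝ) (x : ℝ) : ℝ :=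
  ∑' k : ℕ, (p ^ 2 * m ^ 2 / 4) ^ k * x ^ (2 * k) /
    ((Nat.factorial k : ℝ) * ∏ j ∈ Finset.range k, (p + (j : ℝ) + 1))

section PowerSeries

variable {a : ℕ → ℝ}

def derivCoeff (a : ℕ → ℝ) (n : ℕ) : ℝ := (n + 1) * a (n + 1)

lemma summable_derivCoeff_mul_pow (ha : ∀ r : ℝ, Summable fun n => a n * r ^ n) (r : ℝ) :
    Summable fun n => derivCoeff a n * r ^ n := by
  set R := 2 * (|r| + 1)
  have hR : 0 ≤ R := by positivity
  have habs : Summable fun n => |a (n + 1)| * R ^ (n + 1) := by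
    refine (summable_nat_add_iff (f := fun n => |a n| * R ^ n) 1).mpr
      ((ha R).abs.congr fun n => ?_)
    rw [abs_mul, abs_pow, abs_of_nonneg hR]
  refine habs.of_norm_bounded fun n => ?_
  have h2 : ((n : ℝ) + 1) ≤ 2 ^ (n + 1) := by
    exact_mod_cast (Nat.lt_two_pow_self (n := n + 1)).le
  have hr : |r| ^ n ≤ (|r| + 1) ^ (n + 1) := calc
    |r| ^ n ≤ (|r| + 1) ^ n := by gcongr; linarith
    _ ≤ (|r| + 1) ^ (n + 1) := pow_le_pow_right₀ (by linarith [abs_nonneg r]) n.le_succ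
  calc ‖derivCoeff a n * r ^ n‖ = |a (n + 1)| * (((n : ℝ) + 1) * |r| ^ n) := by
        rw [derivCoeff, Real.norm_eq_abs, abs_mul, abs_mul, abs_pow, abs_of_nonneg (by positivity)]
        ring
    _ ≤ |a (n + 1)| * R ^ (n + 1) := by
        rw [mul_pow]
        gcongr

lemma hasDerivAt_tsum_mul_pow (ha : ∀ r : ℝ, Summable fun n => a n * r ^ n) (x : ℝ) :
    HasDerivAt (fun y => ∑' n, a n * y ^ n) (∑' n, derivCoeff a n * x ^ n) x := by
  have hshift : (fun y => ∑' n, a n * y ^ n) =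
      fun y => a 0 + ∑' n, a (n + 1) * y ^ (n + 1) := by
    funext y
    rw [(ha y).tsum_eq_zero_add, pow_zero, mul_one]
  rw [hshift]
  refine HasDerivAt.const_add _ ?_
  set R := |x| + 1
  have hR : 0 ≤ R := by positivity
  have hx : x ∈ Metric.ball (0 : ℝ) R := by simp [R]
  have hu : Summable fun n => |derivCoeff a n| * R ^ n :=
    (summable_derivCoeff_mul_pow ha R).abs.congr fun n => by rw [abs_mul, abs_pow, abs_of_nonneg hR]
  have h0 : Summable fun n => a (n + 1) * x ^ (n + 1) :=
    (summable_nat_add_iff (f := fun n => a n * x ^ n) 1).mpr (ha x)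
  refine hasDerivAt_tsum_of_isPreconnected (g := fun n y => a (n + 1) * y ^ (n + 1))
    (g' := fun n y => derivCoeff a n * y ^ n)
    hu Metric.isOpen_ball (convex_ball 0 R).isPreconnected (fun n y _ => ?_) (fun n y hy => ?_) hx
    h0 hx
  · refine ((hasDerivAt_pow (n + 1) y).const_mul (a (n + 1))).congr_deriv ?_
    rw [derivCoeff, Nat.add_sub_cancel]
    push_cast
    ring
  · rw [Real.norm_eq_abs, abs_mul, abs_pow]
    gcongr
    exact (mem_ball_zero_iff.mp hy).le

lemma deriv_tsum_mul_pow (ha : ∀ r : ℝ, Summable fun n => a n * r ^ n) :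
    deriv (fun y => ∑' n, a n * y ^ n) = fun x => ∑' n, derivCoeff a n * x ^ n :=
  funext fun x => (hasDerivAt_tsum_mul_pow ha x).deriv

lemma differentiable_tsum_mul_pow (ha : ∀ r : ℝ, Summable fun n => a n * r ^ n) :
    Differentiable ℝ fun y => ∑' n, a n * y ^ n :=
  fun x => (hasDerivAt_tsum_mul_pow ha x).differentiableAt

lemma hasSum_natCast_mul_mul_pow {t : ℝ} (ha : Summable fun n => derivCoeff a n * t ^ n) :
    HasSum (fun n : ℕ => n * a n * t ^ n) (t * ∑' n, derivCoeff a n * t ^ n) := by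
  have hshift := (ha.hasSum.mul_left t).congr_fun fun n =>
    show ((n + 1 : ℕ) : ℝ) * a (n + 1) * t ^ (n + 1) = t * (derivCoeff a n * t ^ n) by
      rw [derivCoeff]
      push_cast
      ring
  simpa using (hasSum_nat_add_iff (f := fun n : ℕ => (n : ℝ) * a n * t ^ n) 1).mp hshift

end PowerSeries

section ComposeSquare

variable {G : ℝ → ℝ}

lemma deriv_comp_sq (hG : Differentiable ℝ G) (x : ℝ) :
    deriv (fun x => G (x ^ 2)) x = 2 * x * deriv G (x ^ 2) := by
  refine ((hG (x ^ 2)).hasDerivAt.comp x (hasDerivAt_pow 2 x)).deriv.trans ?_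
  push_cast
  ring

lemma deriv_deriv_comp_sq (hG : Differentiable ℝ G) (hG' : Differentiable ℝ (deriv G))
    (x : ℝ) :
    deriv (deriv fun x => G (x ^ 2)) x =
      2 * deriv G (x ^ 2) + 4 * x ^ 2 * deriv (deriv G) (x ^ 2) := by
  rw [funext (deriv_comp_sq hG)]
  refine (((hasDerivAt_id x).const_mul 2).mul
    ((hG' (x ^ 2)).hasDerivAt.comp x (hasDerivAt_pow 2 x))).deriv.trans ?_
  simp only [Function.comp, id]
  ring

end ComposeSquare

noncomputable def carliniCoeff (p A : ℝ) (n : ℕ) : ℝ :=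
  A ^ n / (n.factorial * ∏ j ∈ range n, (p + j + 1))

/-- `t ↦ ₀F₁(; p + 1; A t)`; Carlini's `s` is `x ↦ carliniG p (p²m²/4) (x²)`. -/
noncomputable def carliniG (p A : ℝ) : ℝ → ℝ :=
  fun t => ∑' n, carliniCoeff p A n * t ^ n

section CarliniCoeff

variable {p : ℝ}

lemma summable_carliniCoeff_mul_pow (hp : 0 ≤ p) (A r : ℝ) :
    Summable fun n => carliniCoeff p A n * r ^ n := by
  refine (Real.summable_pow_div_factorial |A * r|).of_norm_bounded fun n => ?_
  have hprod : 1 ≤ ∏ j ∈ range n, (p + j + 1) :=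
    one_le_prod fun j _ => by linarith [j.cast_nonneg (α := ℝ)]
  have hfact : (0 : ℝ) < n.factorial := mod_cast n.factorial_pos
  rw [carliniCoeff, Real.norm_eq_abs, div_mul_eq_mul_div, abs_div, ← mul_pow, abs_pow,
    abs_of_pos (mul_pos hfact (by linarith))]
  exact div_le_div_of_nonneg_left (by positivity) hfact (le_mul_of_one_le_right hfact.le hprod)

lemma add_mul_derivCoeff_carliniCoeff (A : ℝ) {n : ℕ} (hn : p + n + 1 ≠ 0) :
    (p + n + 1) * derivCoeff (carliniCoeff p A) n = A * carliniCoeff p A n := by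
  simp only [derivCoeff, carliniCoeff, prod_range_succ, Nat.factorial_succ]
  push_cast
  rcases eq_or_ne (∏ j ∈ range n, (p + j + 1)) 0 with h0 | h0
  · -- both sides are divisions by zero
    simp [h0]
  · field_simp
    ring

lemma carliniG_ode (hp : 0 ≤ p) (A t : ℝ) :
    t * deriv (deriv (carliniG p A)) t + (p + 1) * deriv (carliniG p A) t = A * carliniG p A t := by
  have hc := summable_carliniCoeff_mul_pow hp A
  have hc' := summable_derivCoeff_mul_pow hc
  unfold carliniG
  rw [deriv_tsum_mul_pow hc, deriv_tsum_mul_pow hc']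
  refine ((hasSum_natCast_mul_mul_pow (summable_derivCoeff_mul_pow hc' t)).add
    ((hc' t).hasSum.mul_left (p + 1))).unique ?_
  rw [← tsum_mul_left]
  refine ((hc t).mul_left A).hasSum.congr_fun fun n => ?_
  linear_combination t ^ n * add_mul_derivCoeff_carliniCoeff A (n := n) (by positivity)

end CarliniCoeff

/-- The series defining `s` converges for every real `x`, and for `x ≠ 0` its sum
satisfies the singular differential equation `s'' + ((2p+1)/x)·s' = p²m²·s`. -/
theorem carlini_series_ode (p m : ℝ) (hp : 0 < p) :
    (∀ x : ℝ, Summable (fun k : ℕ =>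
      (p ^ 2 * m ^ 2 / 4) ^ k * x ^ (2 * k) /
        ((Nat.factorial k : ℝ) * ∏ j ∈ Finset.range k, (p + (j : ℝ) + 1)))) ∧
    ∀ x : ℝ, x ≠ 0 →
      deriv (deriv (carliniS p m)) x + ((2 * p + 1) / x) * deriv (carliniS p m) x =
        p ^ 2 * m ^ 2 * carliniS p m x := by
  set A := p ^ 2 * m ^ 2 / 4
  have hc := summable_carliniCoeff_mul_pow hp.le A
  have hterm (x : ℝ) (k : ℕ) : carliniCoeff p A k * (x ^ 2) ^ k =
      A ^ k * x ^ (2 * k) / (k.factorial * ∏ j ∈ range k, (p + j + 1)) := by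
    rw [carliniCoeff, pow_mul]
    ring
  have hS : carliniS p m = fun x => carliniG p A (x ^ 2) :=
    funext fun x => (tsum_congr (hterm x)).symm
  refine ⟨fun x => (hc (x ^ 2)).congr (hterm x), fun x hx => ?_⟩
  have hG : Differentiable ℝ (carliniG p A) := differentiable_tsum_mul_pow hc
  have hG' : Differentiable ℝ (deriv (carliniG p A)) := by
    unfold carliniG
    rw [deriv_tsum_mul_pow hc]
    exact differentiable_tsum_mul_pow (summable_derivCoeff_mul_pow hc)
  rw [hS, deriv_deriv_comp_sq hG hG', deriv_comp_sq hG]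
  field_simp
  linear_combination 4 * carliniG_ode hp.le A (x ^ 2)
end

section
/- Let a > 0 and ν > −1/2 be real numbers, and define y : ℝ → ℝ by y(x) = ∫_0^a (a² − t²)^{ν−1/2}·cos(x·t) dt. Then y is twice differentiable and satisfies x·y''(x) + (2ν+1)·y'(x) + a²·x·y(x) = 0 for every real x. -/
open MeasureTheory Set Real

/-! Differentiating under the integral sign (the weight `(a² - t²)^(ν-1/2)` is integrable on
`[0, a]` since `ν - 1/2 > -1`, and the `x`-derivatives of `cos (x t)` are bounded there) turns
`x y'' + (2ν+1) y' + a² x y` into the integral of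
`x (a² - t²)^(ν+1/2) cos (x t) - (2ν+1) t (a² - t²)^(ν-1/2) sin (x t)`,
which is the `t`-derivative of `(a² - t²)^(ν+1/2) sin (x t)`.
That function vanishes at both `t = 0` and `t = a`. -/

theorem hasDerivAt_integral_mul_of_deriv_le {w : ℝ → ℝ} {a b C : ℝ}
    {g g' : ℝ → ℝ → ℝ}
    (hw : IntervalIntegrable w volume a b) (hg : ∀ x, Continuous (g x))
    (hg' : ∀ x, Continuous (g' x)) (hderiv : ∀ x t, HasDerivAt (g · t) (g' x t) x)
    (hbound : ∀ x, ∀ t ∈ uIoc a b, |g' x t| ≤ C) (x₀ : ℝ) :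
    HasDerivAt (fun x => ∫ t in a..b, w t * g x t) (∫ t in a..b, w t * g' x₀ t) x₀ := by
  have hw_meas : AEStronglyMeasurable w (volume.restrict (uIoc a b)) :=
    hw.def'.aestronglyMeasurable
  refine (intervalIntegral.hasDerivAt_integral_of_dominated_loc_of_deriv_le
    (bound := fun t => |w t| * C) Filter.univ_mem
    (.of_forall fun x => hw_meas.mul (hg x).aestronglyMeasurable)
    (hw.mul_continuousOn (hg x₀).continuousOn) (hw_meas.mul (hg' x₀).aestronglyMeasurable)
    (ae_of_all _ fun t ht x _ => ?_) (hw.norm.mul_const C)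
    (ae_of_all _ fun t _ x _ => (hderiv x t).const_mul (w t))).2
  rw [norm_mul, norm_eq_abs, norm_eq_abs]
  exact mul_le_mul_of_nonneg_left (hbound x t ht) (abs_nonneg _)

section SqSubSq

variable {a p : ℝ}

theorem intervalIntegrable_sq_sub_sq_rpow (ha : 0 < a) (hp : -1 < p) :
    IntervalIntegrable (fun t => (a ^ 2 - t ^ 2) ^ p) volume 0 a := by
  have h_sub : IntervalIntegrable (fun t => (a - t) ^ p) volume 0 a := by
    simpa using
      ((intervalIntegral.intervalIntegrable_rpow' (a := 0) (b := a) hp).comp_sub_left a).symm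
  have h_add : ContinuousOn (fun t => (a + t) ^ p) (uIcc 0 a) := by
    refine ContinuousOn.rpow_const (by fun_prop) fun t ht => Or.inl ?_
    rw [uIcc_of_le ha.le] at ht
    linarith [ht.1]
  refine (h_sub.mul_continuousOn h_add).congr fun t ht => ?_
  rw [uIoc_of_le ha.le] at ht
  rw [← mul_rpow (by linarith [ht.2]) (by linarith [ht.1])]
  ring_nf

theorem hasDerivAt_sq_sub_sq_rpow_mul_sin {t : ℝ} (ht : |t| < a) (x : ℝ) :
    HasDerivAt (fun t => (a ^ 2 - t ^ 2) ^ (p + 1) * sin (x * t))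
      (x * (a ^ 2 - t ^ 2) ^ (p + 1) * cos (x * t)
        - 2 * (p + 1) * t * (a ^ 2 - t ^ 2) ^ p * sin (x * t)) t := by
  have hpos : 0 < a ^ 2 - t ^ 2 := by nlinarith [abs_nonneg t, sq_abs t]
  have hbase : HasDerivAt (fun t => a ^ 2 - t ^ 2) (-(2 * t)) t := by
    simpa using (hasDerivAt_pow 2 t).const_sub (a ^ 2)
  have hsin : HasDerivAt (fun t => sin (x * t)) (cos (x * t) * x) t := by
    simpa using ((hasDerivAt_id t).const_mul x).sin
  refine ((hbase.rpow_const (p := p + 1) (Or.inl hpos.ne')).mul hsin).congr_deriv ?_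
  rw [add_sub_cancel_right]
  ring

theorem integral_deriv_sq_sub_sq_rpow_mul_sin_eq_zero (ha : 0 < a) (hp : -1 < p) (x : ℝ) :
    ∫ t in (0 : ℝ)..a, (x * (a ^ 2 - t ^ 2) ^ (p + 1) * cos (x * t)
        - 2 * (p + 1) * t * (a ^ 2 - t ^ 2) ^ p * sin (x * t)) = 0 := by
  have hcont : Continuous fun t : ℝ => (a ^ 2 - t ^ 2) ^ (p + 1) :=
    (by fun_prop : Continuous fun t : ℝ => a ^ 2 - t ^ 2).rpow_const
      fun _ => Or.inr (by linarith)
  have hint₁ : IntervalIntegrable (fun t => x * (a ^ 2 - t ^ 2) ^ (p + 1) * cos (x * t))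
      volume 0 a :=
    ((continuous_const.mul hcont).mul (by fun_prop)).intervalIntegrable 0 a
  have hint₂ : IntervalIntegrable
      (fun t => 2 * (p + 1) * t * (a ^ 2 - t ^ 2) ^ p * sin (x * t)) volume 0 a :=
    ((intervalIntegrable_sq_sub_sq_rpow ha hp).mul_continuousOn
      (g := fun t => 2 * (p + 1) * t * sin (x * t)) (by fun_prop)).congr fun t _ => by ring
  rw [intervalIntegral.integral_eq_sub_of_hasDeriv_right_of_le ha.le
    (hcont.mul (by fun_prop)).continuousOn
    (fun t ht => (hasDerivAt_sq_sub_sq_rpow_mul_sin (by rw [abs_of_pos ht.1]; exact ht.2)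
      x).hasDerivWithinAt) (hint₁.sub hint₂)]
  simp [zero_rpow (by linarith : p + 1 ≠ 0)]

end SqSubSq

section CosineTransform

variable {w : ℝ → ℝ} {a : ℝ}

theorem hasDerivAt_integral_mul_cos (hw : IntervalIntegrable w volume 0 a) (ha : 0 ≤ a)
    (x : ℝ) :
    HasDerivAt (fun x => ∫ t in (0 : ℝ)..a, w t * cos (x * t))
      (∫ t in (0 : ℝ)..a, w t * -(t * sin (x * t))) x := by
  refine hasDerivAt_integral_mul_of_deriv_le (g := fun x t => cos (x * t))
    (g' := fun x t => -(t * sin (x * t))) (C := a) hw (by fun_prop) (by fun_prop)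
    (fun x t => ?_) (fun x t ht => ?_) x
  · simpa [mul_comm] using (hasDerivAt_mul_const t).cos (x := x)
  · rw [uIoc_of_le ha] at ht
    rw [abs_neg, abs_mul, abs_of_pos ht.1]
    exact mul_le_of_le_one_right ht.1.le (abs_sin_le_one _) |>.trans ht.2

theorem hasDerivAt_integral_mul_sin (hw : IntervalIntegrable w volume 0 a) (ha : 0 ≤ a)
    (x : ℝ) :
    HasDerivAt (fun x => ∫ t in (0 : ℝ)..a, w t * -(t * sin (x * t)))
      (∫ t in (0 : ℝ)..a, w t * -(t ^ 2 * cos (x * t))) x := by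
  refine hasDerivAt_integral_mul_of_deriv_le (g := fun x t => -(t * sin (x * t)))
    (g' := fun x t => -(t ^ 2 * cos (x * t))) (C := a ^ 2) hw (by fun_prop) (by fun_prop)
    (fun x t => ?_) (fun x t ht => ?_) x
  · refine ((hasDerivAt_mul_const t).sin.const_mul t).neg.congr_deriv ?_
    ring
  · rw [uIoc_of_le ha] at ht
    rw [abs_neg, abs_mul, abs_of_pos (pow_pos ht.1 2)]
    exact mul_le_of_le_one_right (pow_pos ht.1 2).le (abs_cos_le_one _) |>.trans
      (pow_le_pow_left₀ ht.1.le ht.2 2)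

end CosineTransform

theorem bessel_combination_integral_sq_sub_sq_rpow_eq_zero {a p : ℝ} (ha : 0 < a)
    (hp : -1 < p) (x : ℝ) :
    x * (∫ t in (0 : ℝ)..a, (a ^ 2 - t ^ 2) ^ p * -(t ^ 2 * cos (x * t)))
      + 2 * (p + 1) * (∫ t in (0 : ℝ)..a, (a ^ 2 - t ^ 2) ^ p * -(t * sin (x * t)))
      + a ^ 2 * x * (∫ t in (0 : ℝ)..a, (a ^ 2 - t ^ 2) ^ p * cos (x * t)) = 0 := by
  have hw := intervalIntegrable_sq_sub_sq_rpow ha hp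
  have h₂ :
      IntervalIntegrable (fun t => (a ^ 2 - t ^ 2) ^ p * -(t ^ 2 * cos (x * t))) volume 0 a :=
    hw.mul_continuousOn (by fun_prop)
  have h₁ : IntervalIntegrable (fun t => (a ^ 2 - t ^ 2) ^ p * -(t * sin (x * t))) volume 0 a :=
    hw.mul_continuousOn (by fun_prop)
  have h₀ : IntervalIntegrable (fun t => (a ^ 2 - t ^ 2) ^ p * cos (x * t)) volume 0 a :=
    hw.mul_continuousOn (by fun_prop)
  rw [← intervalIntegral.integral_const_mul, ← intervalIntegral.integral_const_mul,
    ← intervalIntegral.integral_const_mul,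
    ← intervalIntegral.integral_add (h₂.const_mul _) (h₁.const_mul _),
    ← intervalIntegral.integral_add ((h₂.const_mul _).add (h₁.const_mul _))
      (h₀.const_mul _)]
  refine (intervalIntegral.integral_congr fun t ht => ?_).trans
    (integral_deriv_sq_sub_sq_rpow_mul_sin_eq_zero ha hp x)
  rw [uIcc_of_le ha.le] at ht
  have hbase : 0 ≤ a ^ 2 - t ^ 2 := by nlinarith [ht.1, ht.2]
  simp only [rpow_add_one' hbase (by linarith : p + 1 ≠ 0)]
  ring

/-- Euler's definite-integral solution (as corrected by Jacobi):
`y(x) = ∫_0^a (a² - t²)^{ν-1/2}·cos(x·t) dt` is twice differentiable and satisfies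
`x·y'' + (2ν+1)·y' + a²·x·y = 0`. -/
theorem euler_integral_solution (a ν : ℝ) (ha : 0 < a) (hν : -(1 / 2 : ℝ) < ν)
    (y : ℝ → ℝ)
    (hy : y = fun x : ℝ => ∫ t in (0 : ℝ)..a, (a ^ 2 - t ^ 2) ^ (ν - 1 / 2 : ℝ) * Real.cos (x * t)) :
    (∀ x : ℝ, DifferentiableAt ℝ y x ∧ DifferentiableAt ℝ (deriv y) x) ∧
    ∀ x : ℝ, x * deriv (deriv y) x + (2 * ν + 1) * deriv y x + a ^ 2 * x * y x = 0 := by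
  have hp : -1 < ν - 1 / 2 := by linarith
  have hw := intervalIntegrable_sq_sub_sq_rpow ha hp
  have hy' := fun x => hy ▸ hasDerivAt_integral_mul_cos hw ha.le x
  have hy'' := hasDerivAt_integral_mul_sin hw ha.le
  have h_deriv : deriv y = _ := funext fun x => (hy' x).deriv
  refine ⟨fun x => ⟨(hy' x).differentiableAt, h_deriv ▸ (hy'' x).differentiableAt⟩,
    fun x => ?_⟩
  rw [h_deriv, (hy'' x).deriv, hy, show 2 * ν + 1 = 2 * (ν - 1 / 2 + 1) by ring]
  exact bessel_combination_integral_sq_sub_sq_rpow_eq_zero ha hp x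
end

section
/- Let c ∈ [0,1) and let θ : ℝ → ℝ assign to each u the unique real solution of θ(u) − c·sin θ(u) = u. Then for every integer n ≥ 1, ∫_0^π (θ(u) − u)·sin(n·u) du = (1/n)·∫_0^π cos(n·t − n·c·sin t) dt. -/
/-!
Substitute `u = t - c sin t` (the inverse of `θ`): since `θ(u) - u = c sin t`, the left-hand side
becomes `∫_0^π c sin t · sin(n(t - c sin t)) · (1 - c cos t) dt`. Integrating by parts against
`d(cos(n(t - c sin t)))/n` and using `∫_0^π (1 - c cos t) cos(n(t - c sin t)) dt = 0` turns this into
`(1/n) ∫_0^π cos(n(t - c sin t)) dt`; both boundary terms vanish because `sin 0 = sin π = sin nπ = 0`.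
-/

open Real intervalIntegral

noncomputable section

def meanAnomaly (c t : ℝ) : ℝ := t - c * sin t

namespace meanAnomaly

variable (c : ℝ)

@[simp] lemma zero : meanAnomaly c 0 = 0 := by simp [meanAnomaly]

@[simp] lemma pi : meanAnomaly c π = π := by simp [meanAnomaly]

lemma hasDerivAt (t : ℝ) : HasDerivAt (meanAnomaly c) (1 - c * cos t) t :=
  (hasDerivAt_id t).sub ((hasDerivAt_sin t).const_mul c)

@[fun_prop] lemma continuous : Continuous (meanAnomaly c) := by
  unfold meanAnomaly; fun_prop

lemma strictMono {c : ℝ} (hc : |c| < 1) : StrictMono (meanAnomaly c) :=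
  strictMono_of_hasDerivAt_pos (hasDerivAt c) fun t => by
    have := mul_le_of_le_one_right (abs_nonneg c) (abs_cos_le_one t)
    linarith [le_abs_self (c * cos t), abs_mul c (cos t)]

lemma integral_comp_mul_deriv {f : ℝ → ℝ} (hf : Continuous f) :
    ∫ t in (0 : ℝ)..π, f (meanAnomaly c t) * (1 - c * cos t) = ∫ u in (0 : ℝ)..π, f u := by
  simpa using intervalIntegral.integral_comp_mul_deriv (a := 0) (b := π) (fun t _ => hasDerivAt c t)
    (by fun_prop) hf

lemma hasDerivAt_antiderivative {n : ℝ} (hn : n ≠ 0) (t : ℝ) :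
    HasDerivAt (fun t => -(c * sin t * cos (n * meanAnomaly c t)) / n
        - sin (n * meanAnomaly c t) / n ^ 2)
      (c * sin t * sin (n * meanAnomaly c t) * (1 - c * cos t)
        - cos (n * meanAnomaly c t) / n) t := by
  have hng := (hasDerivAt c t).const_mul n
  have := ((((hasDerivAt_sin t).const_mul c).mul ((hasDerivAt_cos _).comp t hng)).neg.div_const n).sub
    (((hasDerivAt_sin _).comp t hng).div_const (n ^ 2))
  refine this.congr_deriv ?_
  simp only [Function.comp_apply]
  field_simp
  ring

lemma integral_sin_mul_sin {n : ℕ} (hn : n ≠ 0) :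
    ∫ t in (0 : ℝ)..π, c * sin t * sin (n * meanAnomaly c t) * (1 - c * cos t) =
      ∫ t in (0 : ℝ)..π, cos (n * meanAnomaly c t) / n := by
  have hn' : (n : ℝ) ≠ 0 := Nat.cast_ne_zero.mpr hn
  rw [← sub_eq_zero, ← integral_sub ((by fun_prop : Continuous _).intervalIntegrable _ _)
      ((by fun_prop : Continuous _).intervalIntegrable _ _),
    integral_eq_sub_of_hasDerivAt (fun t _ => hasDerivAt_antiderivative c hn' t)
      ((by fun_prop : Continuous _).intervalIntegrable _ _)]
  simp [sin_nat_mul_pi]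

end meanAnomaly

lemma continuous_of_rightInverse_meanAnomaly {c : ℝ} (hc : |c| < 1) {θ : ℝ → ℝ}
    (hθ : Function.RightInverse θ (meanAnomaly c)) : Continuous θ :=
  ((meanAnomaly.strictMono hc).orderIsoOfRightInverse _ θ hθ).symm.continuous

/-- Bessel's formula for the Fourier sine coefficients of the solution of Kepler's
equation: `∫_0^π (θ(u) - u)·sin(nu) du = (1/n)·∫_0^π cos(nt - nc·sin t) dt`. -/
theorem bessel_fourier_coefficient (c : ℝ) (hc0 : 0 ≤ c) (hc1 : c < 1)
    (θ : ℝ → ℝ) (hθ : ∀ u : ℝ, θ u - c * Real.sin (θ u) = u) :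
    ∀ n : ℕ, 1 ≤ n →
      ∫ u in (0 : ℝ)..Real.pi, (θ u - u) * Real.sin (n * u) =
        (1 / n) * ∫ t in (0 : ℝ)..Real.pi, Real.cos (n * t - n * c * Real.sin t) := by
  intro n hn
  have hc : |c| < 1 := abs_lt.mpr ⟨by linarith, hc1⟩
  have hθg : Function.LeftInverse θ (meanAnomaly c) :=
    Function.RightInverse.leftInverse_of_injective hθ (meanAnomaly.strictMono hc).injective
  have hθcont : Continuous θ := continuous_of_rightInverse_meanAnomaly hc hθ
  rw [← meanAnomaly.integral_comp_mul_deriv c (by fun_prop), one_div, ← integral_const_mul]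
  calc _ = ∫ t in (0 : ℝ)..π, c * sin t * sin (n * meanAnomaly c t) * (1 - c * cos t) :=
        integral_congr fun t _ => by rw [hθg t]; simp only [meanAnomaly]; ring
    _ = _ := by
        rw [meanAnomaly.integral_sin_mul_sin c (by omega)]
        exact integral_congr fun t _ => by simp only [meanAnomaly]; ring_nf
end
end

section
/- The integral ∫_0^1 x^x dx equals the sum of the convergent series Σ_{n=1}^∞ (−1)^{n+1}/n^n, i.e. 1/1¹ − 1/2² + 1/3³ − 1/4⁴ + ···. -/
/-!
Expand `x ^ x = exp (x log x) = ∑ (x log x)ⁿ / n!`. Since `|x log x| ≤ 1` on `(0, 1]`, the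
series is dominated by `∑ 1 / n! = e`, so it may be integrated termwise. The substitution
`x = e⁻ᵗ` turns `∫₀¹ (x log x)ⁿ dx` into `(-1)ⁿ ∫₀^∞ tⁿ e^{-(n+1)t} dt = (-1)ⁿ n! / (n+1)ⁿ⁺¹`.
-/

open MeasureTheory Real Set Nat

theorem integral_Ioo_zero_one_eq_integral_Ioi_exp_neg {E : Type*} [NormedAddCommGroup E]
    [NormedSpace ℝ E] (g : ℝ → E) :
    ∫ x in Ioo 0 1, g x = ∫ t in Ioi 0, exp (-t) • g (exp (-t)) := by
  have himage : (fun t => exp (-t)) '' Ioi 0 = Ioo 0 1 := by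
    rw [← exp_zero, ← image_exp_Iio, ← image_image exp Neg.neg, image_neg_Ioi, neg_zero]
  rw [← himage, integral_image_eq_integral_abs_deriv_smul measurableSet_Ioi
    (fun t _ => ((hasDerivAt_neg t).exp).hasDerivWithinAt)
    (fun a _ b _ h => neg_injective (exp_injective h))]
  simp [abs_of_pos (exp_pos _)]

theorem integral_mul_log_pow (n : ℕ) :
    ∫ x in (0 : ℝ)..1, (x * log x) ^ n = (-1) ^ n * n ! / ((n : ℝ) + 1) ^ (n + 1) := by
  have hn : (0 : ℝ) < n + 1 := by positivity
  calc ∫ x in (0 : ℝ)..1, (x * log x) ^ n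
      = ∫ t in Ioi 0, exp (-t) * (exp (-t) * log (exp (-t))) ^ n := by
        rw [intervalIntegral.integral_of_le zero_le_one, integral_Ioc_eq_integral_Ioo,
          integral_Ioo_zero_one_eq_integral_Ioi_exp_neg]
        rfl
    _ = ∫ t in Ioi 0, (-1) ^ n * (t ^ ((n + 1 : ℝ) - 1) * exp (-((n + 1) * t))) := by
        refine setIntegral_congr_fun measurableSet_Ioi fun t _ => ?_
        rw [log_exp, add_sub_cancel_right, rpow_natCast, mul_pow, ← exp_nat_mul,
          show -((n + 1) * t) = -t + n * -t by ring, exp_add]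
        ring
    _ = (-1) ^ n * n ! / ((n : ℝ) + 1) ^ (n + 1) := by
        rw [integral_const_mul, integral_rpow_mul_exp_neg_mul_Ioi hn hn, Gamma_nat_eq_factorial,
          ← Nat.cast_succ, rpow_natCast, Nat.cast_succ, div_pow, one_pow]
        field_simp

theorem hasSum_mul_log_pow_div_factorial {x : ℝ} (hx : 0 < x) :
    HasSum (fun n => (x * log x) ^ n / n !) (x ^ x) := by
  rw [rpow_def_of_pos hx, mul_comm, exp_eq_exp_ℝ]
  exact NormedSpace.expSeries_div_hasSum_exp _

theorem norm_mul_log_pow_div_factorial_le {x : ℝ} (hx : x ∈ Ioc 0 1) (n : ℕ) :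
    ‖(x * log x) ^ n / (n ! : ℝ)‖ ≤ 1 / (n ! : ℝ) := by
  rw [norm_div, norm_pow, norm_natCast, norm_eq_abs, mul_comm]
  gcongr
  exact pow_le_one₀ (abs_nonneg _) (abs_log_mul_self_lt x hx.1 hx.2).le

/-- Johann Bernoulli's series: `∫_0^1 x^x dx = 1/1¹ - 1/2² + 1/3³ - 1/4⁴ + ⋯`. -/
theorem bernoulli_xx_integral :
    HasSum (fun n : ℕ => (-1 : ℝ) ^ n / ((n : ℝ) + 1) ^ (n + 1))
      (∫ x in (0 : ℝ)..1, x ^ (x : ℝ)) := by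
  have hsum := intervalIntegral.hasSum_integral_of_dominated_convergence
    (μ := volume) (F := fun n x => (x * log x) ^ n / n !) (f := fun x => x ^ x)
    (fun n _ => 1 / n !) (fun n => by fun_prop)
    (fun n => ae_of_all _ fun x hx => norm_mul_log_pow_div_factorial_le
      (by rwa [uIoc_of_le zero_le_one] at hx) n)
    (ae_of_all _ fun _ _ => by simpa using Real.summable_pow_div_factorial 1)
    intervalIntegrable_const
    (ae_of_all _ fun x hx => hasSum_mul_log_pow_div_factorial
      (by rw [uIoc_of_le zero_le_one] at hx; exact hx.1))
  have hterm (n : ℕ) :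
      ∫ x in (0 : ℝ)..1, (x * log x) ^ n / n ! = (-1) ^ n / ((n : ℝ) + 1) ^ (n + 1) := by
    rw [intervalIntegral.integral_div, integral_mul_log_pow]
    field_simp
  simpa only [hterm] using hsum
end

section
/- Let α be a real number with 0 < α < π, and define the complex number x = e^{−α·cos α/sin α}·(cos α + i·sin α). Then x is not real, and x·Log(x) (with Log the principal complex logarithm) equals the negative real number −(α/sin α)·e^{−α·cos α/sin α}. In particular, for z := −(α/sin α)·e^{−α·cos α/sin α} < 0, the equation w·Log(w) = z has a nonreal complex solution. -/
/-!
Write `x = e^{t + iα}` with `t = -α cot α`. Since `0 < α < π`, the principal logarithm is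
`Log x = t + iα`, and `x Log x = e^t (cos α + i sin α)(t + iα)`. The choice of `t` is exactly
the one that kills the imaginary part `e^t (t sin α + α cos α)`; the real part is then
`e^t (t cos α - α sin α) = -(α / sin α) e^t`, using `cos² α + sin² α = 1`.
-/

open Complex

lemma ofReal_exp_mul_cos_add_I_mul_sin (t α : ℝ) :
    ((Real.exp t : ℝ) : ℂ) * ((Real.cos α : ℂ) + I * (Real.sin α : ℂ)) = exp (t + α * I) := by
  rw [exp_add, exp_mul_I, ofReal_exp, ofReal_cos, ofReal_sin, mul_comm I]

lemma log_ofReal_exp_mul_cos_add_I_mul_sin (t α : ℝ) (h₁ : -Real.pi < α) (h₂ : α ≤ Real.pi) :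
    log (((Real.exp t : ℝ) : ℂ) * ((Real.cos α : ℂ) + I * (Real.sin α : ℂ))) = t + α * I := by
  rw [ofReal_exp_mul_cos_add_I_mul_sin, log_exp] <;> simpa

lemma add_I_mul_mul_neg_div_add_I_mul (c s α : ℝ) (hcs : c ^ 2 + s ^ 2 = 1) (hs : s ≠ 0) :
    ((c : ℂ) + I * s) * ((-(α * c / s) : ℝ) + α * I) = ((-(α / s) : ℝ) : ℂ) := by
  have hs' : (s : ℂ) ≠ 0 := ofReal_ne_zero.mpr hs
  have hcs' : (c : ℂ) ^ 2 + (s : ℂ) ^ 2 = 1 := by exact_mod_cast hcs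
  push_cast
  field_simp
  linear_combination (α : ℂ) * s ^ 2 * I_sq - (α : ℂ) * hcs'

/-- Carlini's complex roots of `x·log x = z` for negative `z`: for `0 < α < π` the
number `x = e^{-α·cos α/sin α}(cos α + i·sin α)` is not real and satisfies
`x·Log x = -(α/sin α)·e^{-α·cos α/sin α} < 0`; in particular `w·Log w = z` has a
nonreal solution for this negative real `z`. -/
theorem carlini_complex_roots (α : ℝ) (h0 : 0 < α) (hπ : α < Real.pi) :
    (((Real.exp (-(α * Real.cos α / Real.sin α)) : ℝ) : ℂ) *
        ((Real.cos α : ℂ) + Complex.I * (Real.sin α : ℂ))).im ≠ 0 ∧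
    (-(α / Real.sin α) * Real.exp (-(α * Real.cos α / Real.sin α)) < 0) ∧
    (((Real.exp (-(α * Real.cos α / Real.sin α)) : ℝ) : ℂ) *
        ((Real.cos α : ℂ) + Complex.I * (Real.sin α : ℂ))) *
      Complex.log
        (((Real.exp (-(α * Real.cos α / Real.sin α)) : ℝ) : ℂ) *
          ((Real.cos α : ℂ) + Complex.I * (Real.sin α : ℂ))) =
      ((-(α / Real.sin α) * Real.exp (-(α * Real.cos α / Real.sin α)) : ℝ) : ℂ) ∧
    ∃ w : ℂ, w.im ≠ 0 ∧
      w * Complex.log w =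
        ((-(α / Real.sin α) * Real.exp (-(α * Real.cos α / Real.sin α)) : ℝ) : ℂ) := by
  have hs : 0 < Real.sin α := Real.sin_pos_of_pos_of_lt_pi h0 hπ
  set t : ℝ := -(α * Real.cos α / Real.sin α)
  set x : ℂ := ((Real.exp t : ℝ) : ℂ) * ((Real.cos α : ℂ) + I * (Real.sin α : ℂ))
  have him : x.im ≠ 0 := by
    have hx : x.im = Real.exp t * Real.sin α := by
      simp only [x, mul_im, add_re, add_im, mul_re, I_re, I_im, ofReal_re, ofReal_im]
      ring
    rw [hx]
    positivity
  have hneg : -(α / Real.sin α) * Real.exp t < 0 :=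
    mul_neg_of_neg_of_pos (neg_neg_of_pos (div_pos h0 hs)) (Real.exp_pos t)
  have hroot : x * log x = ((-(α / Real.sin α) * Real.exp t : ℝ) : ℂ) := by
    rw [log_ofReal_exp_mul_cos_add_I_mul_sin t α (by linarith [Real.pi_pos]) hπ.le, mul_assoc,
      add_I_mul_mul_neg_div_add_I_mul _ _ α (Real.cos_sq_add_sin_sq α) hs.ne', ofReal_mul, mul_comm]
  exact ⟨him, hneg, hroot, x, him, hroot⟩
end
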